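/- arXiv:1811.08384 — 2 statements merged into one kernel-verified Lean document; each statement's English description precedes it below -/
import Mathlib

section
/- The group presented as ⟨a, b | a·b·a = b·a·b, a⁻¹·b·a²·b = 1⟩ (the trefoil knot group with the framing-3 longitude λ = cab, c = a⁻¹ba, set equal to the identity) is isomorphic to the binary tetrahedral group presented as ⟨A, B, C | A³ = B³ = C² = A·B·C⟩. -/
/-- The relators of the presentation `⟨a, b | a·b·a = b·a·b, a⁻¹·b·a²·b = 1⟩`:
the trefoil knot group with the framing-3 longitude `λ = cab` (`c = a⁻¹ba`)
set equal to the identity. Generators: `a = of 0`, `b = of 1`. -/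
def trefoilFramingThreeRels : Set (FreeGroup (Fin 2)) :=
  { (FreeGroup.of 0 * FreeGroup.of 1 * FreeGroup.of 0) *
      (FreeGroup.of 1 * FreeGroup.of 0 * FreeGroup.of 1)⁻¹,
    (FreeGroup.of 0)⁻¹ * FreeGroup.of 1 * FreeGroup.of 0 ^ 2 * FreeGroup.of 1 }

/-- The relators of the presentation `⟨A, B, C | A³ = B³ = C² = A·B·C⟩` of the
binary tetrahedral group `⟨3,3,2⟩`. Generators: `A = of 0`, `B = of 1`, `C = of 2`. -/
def binaryTetrahedralRels : Set (FreeGroup (Fin 3)) :=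
  { FreeGroup.of 0 ^ 3 * (FreeGroup.of 1 ^ 3)⁻¹,
    FreeGroup.of 1 ^ 3 * (FreeGroup.of 2 ^ 2)⁻¹,
    FreeGroup.of 2 ^ 2 * (FreeGroup.of 0 * FreeGroup.of 1 * FreeGroup.of 2)⁻¹ }

/-!
The isomorphism is explicit on generators: `A ↦ ab`, `B ↦ a`, `C ↦ aba`, with inverse
`a ↦ B`, `b ↦ B⁻¹A`. The framing relation says `b a² b = a`, whence `(aba)² = a³`, and with
the braid relation also `(ab)³ = (aba)(bab) = a³`. Conversely, `C² = ABC` forces `C = AB`,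
after which `A³ = B³ = C²` gives `BAB = A²` and `ABA = B²`, which are the braid and framing
relations for `B` and `B⁻¹A`.
-/

section

variable {G : Type*} [Group G]

theorem mul_eq_of_sq_eq_mul_mul {A B C : G} (h : C ^ 2 = A * B * C) : A * B = C :=
  mul_right_cancel (h.symm.trans (sq C))

theorem mul_mul_eq_sq_of_binaryTetrahedral {A B C : G} (h₁ : A ^ 3 = B ^ 3) (h₂ : B ^ 3 = C ^ 2)
    (h₃ : C ^ 2 = A * B * C) : B * A * B = A ^ 2 := by
  apply mul_left_cancel (a := A)
  calc A * (B * A * B) = (A * B) ^ 2 := by simp only [sq, mul_assoc]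
    _ = A * A ^ 2 := by rw [mul_eq_of_sq_eq_mul_mul h₃, ← h₂, ← h₁, pow_succ']

theorem mul_mul_eq_sq_of_binaryTetrahedral' {A B C : G} (h₁ : A ^ 3 = B ^ 3)
    (h₂ : B ^ 3 = C ^ 2) (h₃ : C ^ 2 = A * B * C) : A * B * A = B ^ 2 := by
  apply mul_right_cancel (b := B)
  calc A * B * A * B = A * (B * A * B) := by group
    _ = B ^ 2 * B := by
      rw [mul_mul_eq_sq_of_binaryTetrahedral h₁ h₂ h₃, ← pow_succ', h₁, pow_succ]

theorem braid_of_binaryTetrahedral {A B C : G} (h₁ : A ^ 3 = B ^ 3) (h₂ : B ^ 3 = C ^ 2)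
    (h₃ : C ^ 2 = A * B * C) : B * (B⁻¹ * A) * B = B⁻¹ * A * B * (B⁻¹ * A) :=
  calc B * (B⁻¹ * A) * B = B⁻¹ * (B * A * B) := by group
    _ = B⁻¹ * A * B * (B⁻¹ * A) := by
      rw [mul_mul_eq_sq_of_binaryTetrahedral h₁ h₂ h₃, sq]; group

theorem framing_of_binaryTetrahedral {A B C : G} (h₁ : A ^ 3 = B ^ 3) (h₂ : B ^ 3 = C ^ 2)
    (h₃ : C ^ 2 = A * B * C) : B⁻¹ * (B⁻¹ * A) * B ^ 2 * (B⁻¹ * A) = 1 :=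
  calc B⁻¹ * (B⁻¹ * A) * B ^ 2 * (B⁻¹ * A) = B⁻¹ * B⁻¹ * (A * B * A) := by group
    _ = 1 := by rw [mul_mul_eq_sq_of_binaryTetrahedral' h₁ h₂ h₃]; group

theorem sq_mul_mul_eq_pow_three_of_framing {a b : G} (hframe : a⁻¹ * b * a ^ 2 * b = 1) :
    (a * b * a) ^ 2 = a ^ 3 := by
  have hbab : b * a ^ 2 * b = a := by
    rwa [mul_assoc, mul_assoc, inv_mul_eq_one, eq_comm, ← mul_assoc] at hframe
  calc (a * b * a) ^ 2 = a * (b * a ^ 2 * b) * a := by simp only [sq, mul_assoc]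
    _ = a ^ 3 := by rw [hbab, pow_three, mul_assoc]

theorem mul_pow_three_eq_pow_three_of_trefoil {a b : G} (hbraid : a * b * a = b * a * b)
    (hframe : a⁻¹ * b * a ^ 2 * b = 1) : (a * b) ^ 3 = a ^ 3 :=
  calc (a * b) ^ 3 = a * b * a * (b * a * b) := by
        simp only [pow_succ, pow_zero, one_mul, mul_assoc]
    _ = a ^ 3 := by rw [← hbraid, ← sq, sq_mul_mul_eq_pow_three_of_framing hframe]

def trefoilFramingThreeLift {a b : G} (hbraid : a * b * a = b * a * b)
    (hframe : a⁻¹ * b * a ^ 2 * b = 1) : PresentedGroup trefoilFramingThreeRels →* G :=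
  PresentedGroup.toGroup (f := ![a, b]) <| by
    rintro r (rfl | rfl) <;> simp [hbraid, hframe]

@[simp]
theorem trefoilFramingThreeLift_of_zero {a b : G} (hbraid : a * b * a = b * a * b)
    (hframe : a⁻¹ * b * a ^ 2 * b = 1) : trefoilFramingThreeLift hbraid hframe (.of 0) = a :=
  PresentedGroup.toGroup.of _

@[simp]
theorem trefoilFramingThreeLift_of_one {a b : G} (hbraid : a * b * a = b * a * b)
    (hframe : a⁻¹ * b * a ^ 2 * b = 1) : trefoilFramingThreeLift hbraid hframe (.of 1) = b :=
  PresentedGroup.toGroup.of _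

def binaryTetrahedralLift {A B C : G} (h₁ : A ^ 3 = B ^ 3) (h₂ : B ^ 3 = C ^ 2)
    (h₃ : C ^ 2 = A * B * C) : PresentedGroup binaryTetrahedralRels →* G :=
  PresentedGroup.toGroup (f := ![A, B, C]) <| by
    rintro r (rfl | rfl | rfl) <;> simp [h₁, h₂, h₃]

@[simp]
theorem binaryTetrahedralLift_of_zero {A B C : G} (h₁ : A ^ 3 = B ^ 3) (h₂ : B ^ 3 = C ^ 2)
    (h₃ : C ^ 2 = A * B * C) : binaryTetrahedralLift h₁ h₂ h₃ (.of 0) = A :=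
  PresentedGroup.toGroup.of _

@[simp]
theorem binaryTetrahedralLift_of_one {A B C : G} (h₁ : A ^ 3 = B ^ 3) (h₂ : B ^ 3 = C ^ 2)
    (h₃ : C ^ 2 = A * B * C) : binaryTetrahedralLift h₁ h₂ h₃ (.of 1) = B :=
  PresentedGroup.toGroup.of _

@[simp]
theorem binaryTetrahedralLift_of_two {A B C : G} (h₁ : A ^ 3 = B ^ 3) (h₂ : B ^ 3 = C ^ 2)
    (h₃ : C ^ 2 = A * B * C) : binaryTetrahedralLift h₁ h₂ h₃ (.of 2) = C :=
  PresentedGroup.toGroup.of _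

end

open PresentedGroup

theorem trefoilFramingThree_braid :
    (of 0 * of 1 * of 0 : PresentedGroup trefoilFramingThreeRels) = of 1 * of 0 * of 1 :=
  mk_eq_mk_of_mul_inv_mem (Set.mem_insert _ _)

theorem trefoilFramingThree_framing :
    ((of 0)⁻¹ * of 1 * of 0 ^ 2 * of 1 : PresentedGroup trefoilFramingThreeRels) = 1 :=
  one_of_mem (Set.mem_insert_of_mem _ rfl)

theorem binaryTetrahedral_pow_three_eq_pow_three :
    (of 0 ^ 3 : PresentedGroup binaryTetrahedralRels) = of 1 ^ 3 :=
  mk_eq_mk_of_mul_inv_mem (Set.mem_insert _ _)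

theorem binaryTetrahedral_pow_three_eq_sq :
    (of 1 ^ 3 : PresentedGroup binaryTetrahedralRels) = of 2 ^ 2 :=
  mk_eq_mk_of_mul_inv_mem (Set.mem_insert_of_mem _ (Set.mem_insert _ _))

theorem binaryTetrahedral_sq_eq_mul_mul :
    (of 2 ^ 2 : PresentedGroup binaryTetrahedralRels) = of 0 * of 1 * of 2 :=
  mk_eq_mk_of_mul_inv_mem (Set.mem_insert_of_mem _ (Set.mem_insert_of_mem _ rfl))

noncomputable def trefoilFramingThreeToBinaryTetrahedral :
    PresentedGroup trefoilFramingThreeRels →* PresentedGroup binaryTetrahedralRels :=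
  trefoilFramingThreeLift
    (braid_of_binaryTetrahedral binaryTetrahedral_pow_three_eq_pow_three
      binaryTetrahedral_pow_three_eq_sq binaryTetrahedral_sq_eq_mul_mul)
    (framing_of_binaryTetrahedral binaryTetrahedral_pow_three_eq_pow_three
      binaryTetrahedral_pow_three_eq_sq binaryTetrahedral_sq_eq_mul_mul)

noncomputable def binaryTetrahedralToTrefoilFramingThree :
    PresentedGroup binaryTetrahedralRels →* PresentedGroup trefoilFramingThreeRels :=
  binaryTetrahedralLift
    (mul_pow_three_eq_pow_three_of_trefoil trefoilFramingThree_braid trefoilFramingThree_framing)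
    (sq_mul_mul_eq_pow_three_of_framing trefoilFramingThree_framing).symm
    (sq _)

theorem binaryTetrahedralToTrefoilFramingThree_comp :
    binaryTetrahedralToTrefoilFramingThree.comp trefoilFramingThreeToBinaryTetrahedral =
      MonoidHom.id _ := by
  ext i
  fin_cases i <;>
    simp [binaryTetrahedralToTrefoilFramingThree, trefoilFramingThreeToBinaryTetrahedral]

theorem trefoilFramingThreeToBinaryTetrahedral_comp :
    trefoilFramingThreeToBinaryTetrahedral.comp binaryTetrahedralToTrefoilFramingThree =
      MonoidHom.id _ := by
  ext i
  fin_cases i <;>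
    simp [binaryTetrahedralToTrefoilFramingThree, trefoilFramingThreeToBinaryTetrahedral,
      mul_eq_of_sq_eq_mul_mul binaryTetrahedral_sq_eq_mul_mul]

/-- The group `⟨a, b | a·b·a = b·a·b, a⁻¹·b·a²·b = 1⟩` (the trefoil knot group with
the framing-3 longitude collapsed) is isomorphic to the binary tetrahedral group
`⟨A, B, C | A³ = B³ = C² = A·B·C⟩`. -/
theorem trefoil_framing_three_iso_binary_tetrahedral :
    Nonempty (PresentedGroup trefoilFramingThreeRels ≃*
      PresentedGroup binaryTetrahedralRels) :=
  ⟨MonoidHom.toMulEquiv _ _ binaryTetrahedralToTrefoilFramingThree_comp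
    trefoilFramingThreeToBinaryTetrahedral_comp⟩
end

section
/- Let p, q ≥ 1, let D^p and D^q denote the closed unit balls in ℝ^p and ℝ^q, and let S^{p-1} and S^{q-1} denote the unit spheres in ℝ^p and ℝ^q. Then the subset (S^{p-1} × D^q) ∪ (D^p × S^{q-1}) of ℝ^p × ℝ^q, with the subspace topology, is homeomorphic to the unit sphere S^{p+q-1} in ℝ^{p+q}. -/
/-!
The union is exactly the unit sphere of `ℝ^p × ℝ^q` for the sup norm (`Metric.sphere_prod`),
and `ℝ^p × ℝ^q ≃L ℝ^{p+q}` by counting dimensions. A continuous linear isomorphism `e` induces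
a homeomorphism of unit spheres by radial projection `x ↦ ‖e x‖⁻¹ • e x`, whose inverse is the
radial projection of `e⁻¹` because `e` commutes with positive scalings.
-/

open Metric

theorem inv_norm_smul_smul_of_pos {E : Type*} [NormedAddCommGroup E] [NormedSpace ℝ E]
    {c : ℝ} (hc : 0 < c) (y : E) : ‖c • y‖⁻¹ • (c • y) = ‖y‖⁻¹ • y := by
  rw [norm_smul, Real.norm_of_nonneg hc.le, smul_smul, mul_inv, mul_right_comm,
    inv_mul_cancel₀ hc.ne', one_mul]

namespace ContinuousLinearEquiv

variable {E F : Type*} [NormedAddCommGroup E] [NormedSpace ℝ E]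
  [NormedAddCommGroup F] [NormedSpace ℝ F]

noncomputable def unitSphereMap (e : E ≃L[ℝ] F) (x : sphere (0 : E) 1) : sphere (0 : F) 1 :=
  ⟨‖e x‖⁻¹ • e x, mem_sphere_zero_iff_norm.2 <|
    norm_smul_inv_norm (e.map_ne_zero_iff.2 (ne_zero_of_mem_unit_sphere x))⟩

theorem continuous_unitSphereMap (e : E ≃L[ℝ] F) : Continuous e.unitSphereMap := by
  have he : Continuous fun x : sphere (0 : E) 1 ↦ e x := by fun_prop
  refine (Continuous.smul (he.norm.inv₀ fun x ↦ ?_) he).subtype_mk _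
  exact norm_ne_zero_iff.2 (e.map_ne_zero_iff.2 (ne_zero_of_mem_unit_sphere x))

theorem symm_unitSphereMap_unitSphereMap (e : E ≃L[ℝ] F) (x : sphere (0 : E) 1) :
    e.symm.unitSphereMap (e.unitSphereMap x) = x := by
  have hpos : 0 < ‖e x‖⁻¹ :=
    inv_pos.2 (norm_pos_iff.2 (e.map_ne_zero_iff.2 (ne_zero_of_mem_unit_sphere x)))
  ext
  simp only [unitSphereMap, map_smul, symm_apply_apply, inv_norm_smul_smul_of_pos hpos,
    norm_eq_of_mem_sphere x, inv_one, one_smul]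

noncomputable def unitSphereHomeomorph (e : E ≃L[ℝ] F) :
    sphere (0 : E) 1 ≃ₜ sphere (0 : F) 1 where
  toFun := e.unitSphereMap
  invFun := e.symm.unitSphereMap
  left_inv := e.symm_unitSphereMap_unitSphereMap
  right_inv := e.symm.symm_unitSphereMap_unitSphereMap
  continuous_toFun := e.continuous_unitSphereMap
  continuous_invFun := e.symm.continuous_unitSphereMap

end ContinuousLinearEquiv

theorem union_sphere_ball_ball_sphere_homeomorph_sphere_general (p q : ℕ) :
    Nonempty
      (↥((Metric.sphere (0 : EuclideanSpace ℝ (Fin p)) 1) ×ˢ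
            (Metric.closedBall (0 : EuclideanSpace ℝ (Fin q)) 1) ∪
          (Metric.closedBall (0 : EuclideanSpace ℝ (Fin p)) 1) ×ˢ
            (Metric.sphere (0 : EuclideanSpace ℝ (Fin q)) 1)) ≃ₜ
        ↥(Metric.sphere (0 : EuclideanSpace ℝ (Fin (p + q))) 1)) := by
  have hfinrank : Module.finrank ℝ (EuclideanSpace ℝ (Fin p) × EuclideanSpace ℝ (Fin q)) =
      Module.finrank ℝ (EuclideanSpace ℝ (Fin (p + q))) := by
    simp only [Module.finrank_prod, finrank_euclideanSpace_fin]
  have hunion := (sphere_prod (0 : EuclideanSpace ℝ (Fin p) × EuclideanSpace ℝ (Fin q)) 1).symm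
  exact ⟨(Homeomorph.setCongr hunion).trans
    (ContinuousLinearEquiv.ofFinrankEq hfinrank).unitSphereHomeomorph⟩

/-- The subset `(S^{p-1} × D^q) ∪ (D^p × S^{q-1})` of `ℝ^p × ℝ^q`, with the subspace
topology, is homeomorphic to the unit sphere `S^{p+q-1}` in `ℝ^{p+q}`: gluing the
initial and final instances of surgery along their common boundary yields a sphere. -/
theorem union_sphere_ball_ball_sphere_homeomorph_sphere (p q : ℕ) (hp : 1 ≤ p) (hq : 1 ≤ q) :
    Nonempty
      (↥((Metric.sphere (0 : EuclideanSpace ℝ (Fin p)) 1) ×ˢ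
            (Metric.closedBall (0 : EuclideanSpace ℝ (Fin q)) 1) ∪
          (Metric.closedBall (0 : EuclideanSpace ℝ (Fin p)) 1) ×ˢ
            (Metric.sphere (0 : EuclideanSpace ℝ (Fin q)) 1)) ≃ₜ
        ↥(Metric.sphere (0 : EuclideanSpace ℝ (Fin (p + q))) 1)) :=
  union_sphere_ball_ball_sphere_homeomorph_sphere_general p q
end
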